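/- arXiv:1105.2732 — 3 statements merged into one kernel-verified Lean document; each statement's English description precedes it below -/
import Mathlib

section
/- Let X be a Banach space and k ∈ ℕ. Assume that X admits a k-spreading model equivalent to the usual basis of ℓ^1 (i.e. there is a k-sequence in X admitting a k-spreading model equivalent to the usual basis of ℓ^1). Then for every ε > 0 there exists a k-sequence (y_s)_{s∈[ℕ]^k} in X with 1 − ε ≤ ‖y_s‖ ≤ 1 for every s ∈ [ℕ]^k which generates (with M = ℕ and some null sequence of positive reals) a k-spreading model admitting a lower ℓ^1-estimate of constant 1 − ε. -/
/-- `s : Fin k → ℕ` is the increasing enumeration of a `k`-element subset of `M`. -/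
def IsEnum (M : Set ℕ) {k : ℕ} (s : Fin k → ℕ) : Prop :=
  StrictMono s ∧ ∀ i, s i ∈ M

/-- `(p j)_{j=1,…,l}` is a plegma family in `[M]^k`. -/
def IsPlegma (M : Set ℕ) {k l : ℕ} (p : Fin l → Fin k → ℕ) : Prop :=
  (∀ j, IsEnum M (p j)) ∧
  (∀ i : Fin k, StrictMono fun j : Fin l => p j i) ∧
  (∀ (i : Fin k) (hi : (i : ℕ) + 1 < k) (j j' : Fin l), p j i < p j' ⟨(i : ℕ) + 1, hi⟩)


/-- A null sequence of positive reals. -/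
def IsNullPos (δ : ℕ → ℝ) : Prop :=
  (∀ n, 0 < δ n) ∧ Filter.Tendsto δ Filter.atTop (nhds 0)

/-- The sequence `(e n)` is spreading with respect to the seminorm `ρ`:
`ρ (∑ a_i • e_i) = ρ (∑ a_i • e_{k_i})` for all strictly increasing `(k_i)`. -/
def IsSpreadingWith {E : Type*} [AddCommGroup E] [Module ℝ E]
    (ρ : Seminorm ℝ E) (e : ℕ → E) : Prop :=
  ∀ (n : ℕ) (a : Fin n → ℝ) (f : Fin n → ℕ), StrictMono f →
    ρ (∑ i, a i • e (i : ℕ)) = ρ (∑ i, a i • e (f i))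

/-- The `k`-subsequence `(x_s)_{s ∈ [M]^k}` generates `(e n)` (in the seminormed space
`(E, ρ)`) as a `k`-spreading model with respect to the null sequence `δ`: for all
`m ≤ l` (0-indexed), every plegma family `(p j)_{j=0}^{m}` in `[M]^k` whose first (hence
every) entry is `≥ M l`, and all coefficients in `[-1,1]`,
`| ‖∑ a_j • x_{p j}‖ - ρ (∑ a_j • e_j) | ≤ δ l`. The infinite set `M` is represented by
its increasing enumeration. -/
def Generates {X : Type*} [SeminormedAddCommGroup X] [NormedSpace ℝ X]
    {E : Type*} [AddCommGroup E] [Module ℝ E] (ρ : Seminorm ℝ E)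
    {k : ℕ} (x : (Fin k → ℕ) → X) (M : ℕ → ℕ) (e : ℕ → E) (δ : ℕ → ℝ) : Prop :=
  ∀ m l : ℕ, m ≤ l → ∀ p : Fin (m + 1) → Fin k → ℕ,
    IsPlegma (Set.range M) p →
    (∀ (j : Fin (m + 1)) (i : Fin k), M l ≤ p j i) →
    ∀ a : Fin (m + 1) → ℝ, (∀ j, a j ∈ Set.Icc (-1 : ℝ) 1) →
      |‖∑ j, a j • x (p j)‖ - ρ (∑ j, a j • e (j : ℕ))| ≤ δ l


/-- `(e n)` admits a lower `ℓ¹`-estimate of constant `c` with respect to the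
seminorm `ρ`. -/
def LowerL1 {E : Type*} [AddCommGroup E] [Module ℝ E]
    (ρ : Seminorm ℝ E) (e : ℕ → E) (c : ℝ) : Prop :=
  ∀ (n : ℕ) (a : Fin n → ℝ), c * ∑ i, |a i| ≤ ρ (∑ i, a i • e (i : ℕ))

/-- `(e n)` is equivalent to the usual basis of `ℓ¹` with respect to the seminorm `ρ`. -/
def EquivL1Basis {E : Type*} [AddCommGroup E] [Module ℝ E]
    (ρ : Seminorm ℝ E) (e : ℕ → E) : Prop :=
  ∃ c C : ℝ, 0 < c ∧ c ≤ C ∧ LowerL1 ρ e c ∧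
    ∀ (n : ℕ) (a : Fin n → ℝ), ρ (∑ i, a i • e (i : ℕ)) ≤ C * ∑ i, |a i|

/-! Auxiliary lemmas -/

private lemma step_lem {d x y : ℕ} (i1 i2 : ℕ) (h1 : i1 < d) (hxy : x < y) :
    d * x + i1 < d * y + i2 := by
  have h2 : d * (x+1) ≤ d * y := Nat.mul_le_mul_left d hxy
  rw [Nat.mul_succ] at h2; omega

private lemma sum_fin_mul {α : Type*} [AddCommMonoid α] (n d : ℕ) (f : ℕ → α) :
    ∑ w : Fin (n * d), f (w : ℕ) = ∑ j : Fin n, ∑ i : Fin d, f ((i : ℕ) + d * (j : ℕ)) := by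
  rw [← Equiv.sum_comp (finProdFinEquiv (m := n) (n := d)) (fun w : Fin (n*d) => f (w:ℕ))]
  rw [Fintype.sum_prod_type]
  rfl

private lemma arith1 {lam th ep : ℝ} (hθ : 0 < th) (hε : 0 < ep) (h1 : 0 < 1 - ep)
    (hlt : lam < th * (1 + ep / 2)) : lam * (1 - ep) ≤ th := by
  nlinarith [mul_lt_mul_of_pos_right hlt h1, mul_pos hθ hε, mul_pos (mul_pos hθ hε) hε]

private lemma sum_fin_ext {α : Type*} [AddCommMonoid α] {n m : ℕ} (h : n = m) (f : ℕ → α) :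
    ∑ w : Fin n, f (w:ℕ) = ∑ w : Fin m, f (w:ℕ) := by subst h; rfl

private lemma div_of_lt' (i d j : ℕ) (hi : i < d) : (i + d * j) / d = j := by
  rw [Nat.add_mul_div_left _ _ (by omega : 0 < d), Nat.div_eq_of_lt hi]; omega

private lemma mod_of_lt' (i d j : ℕ) (hi : i < d) : (i + d * j) % d = i := by
  rw [Nat.add_mul_mod_self_left, Nat.mod_eq_of_lt hi]

set_option maxHeartbeats 2000000 in
/-- If a Banach space `X` admits a `k`-spreading model equivalent to
the usual basis of `ℓ¹` (spreading models are realized on the space `ℕ →₀ ℝ` of finitely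
supported sequences with unit vectors `Finsupp.single · 1` and a seminorm), then for
every `ε > 0` there is a `k`-sequence `(y s)` in `X` with `1 - ε ≤ ‖y s‖ ≤ 1` for all
`s` which generates (with `M = ℕ`) a `k`-spreading model admitting a lower
`ℓ¹`-estimate of constant `1 - ε`. -/
theorem statement15 {X : Type*} [NormedAddCommGroup X] [NormedSpace ℝ X] [CompleteSpace X]
    (k : ℕ) (hk : 0 < k)
    (hadm : ∃ (x : (Fin k → ℕ) → X) (ρ : Seminorm ℝ (ℕ →₀ ℝ)) (M : ℕ → ℕ) (δ : ℕ → ℝ),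
      StrictMono M ∧ IsNullPos δ ∧
      Generates ρ x M (fun n => Finsupp.single n (1 : ℝ)) δ ∧
      EquivL1Basis ρ (fun n => Finsupp.single n (1 : ℝ))) :
    ∀ ε : ℝ, 0 < ε →
      ∃ y : (Fin k → ℕ) → X, (∀ s : Fin k → ℕ, 1 - ε ≤ ‖y s‖ ∧ ‖y s‖ ≤ 1) ∧
        ∃ (ρ : Seminorm ℝ (ℕ →₀ ℝ)) (δ : ℕ → ℝ), IsNullPos δ ∧
          Generates ρ y (fun n => n) (fun n => Finsupp.single n (1 : ℝ)) δ ∧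
          LowerL1 ρ (fun n => Finsupp.single n (1 : ℝ)) (1 - ε) := by
  classical
  intro ε hε
  obtain ⟨x, ρ, M, δ, hM, hδ, hgen, c, C, hc, hcC, hlow, hupp⟩ := hadm
  set e : ℕ → (ℕ →₀ ℝ) := fun n => Finsupp.single n (1:ℝ) with he
  -- the infimum over normalized finite combinations
  set S : Set ℝ :=
    {r | ∃ (n : ℕ) (b : Fin n → ℝ), (∑ i, |b i|) = 1 ∧ ρ (∑ i, b i • e (i:ℕ)) = r} with hS
  have hSne : S.Nonempty := by
    refine ⟨ρ (e 0), 1, fun _ => 1, by simp, by simp⟩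
  have hSlb : ∀ r ∈ S, c ≤ r := by
    rintro r ⟨n, b, hb1, rfl⟩
    have h := hlow n b
    rw [hb1, mul_one] at h
    exact h
  have hbdd : BddBelow S := ⟨c, hSlb⟩
  set θ := sInf S with hθ
  have hθc : c ≤ θ := le_csInf hSne hSlb
  have hθpos : 0 < θ := lt_of_lt_of_le hc hθc
  -- key lower estimate from the infimum
  have hθkey : ∀ (n : ℕ) (cf : Fin n → ℝ),
      θ * ∑ i, |cf i| ≤ ρ (∑ i, cf i • e (i:ℕ)) := by
    intro n cf
    by_cases h0 : (∑ i, |cf i|) = 0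
    · have hz : ∀ i ∈ Finset.univ, cf i = 0 := by
        intro i _
        have := (Finset.sum_eq_zero_iff_of_nonneg
          (fun i _ => abs_nonneg (cf i))).mp h0 i (Finset.mem_univ i)
        exact abs_eq_zero.mp this
      rw [h0, mul_zero, Finset.sum_congr rfl (fun i hi => by rw [hz i hi, zero_smul])]
      simp
    · set S0 := ∑ i, |cf i| with hS0
      have hS0pos : 0 < S0 :=
        lt_of_le_of_ne (Finset.sum_nonneg fun i _ => abs_nonneg _) (Ne.symm h0)
      have hmem : ρ (∑ i, (S0⁻¹ * cf i) • e (i:ℕ)) ∈ S := by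
        refine ⟨n, fun i => S0⁻¹ * cf i, ?_, rfl⟩
        simp only [abs_mul, abs_of_pos (inv_pos.mpr hS0pos)]
        rw [← Finset.mul_sum, ← hS0, inv_mul_cancel₀ (ne_of_gt hS0pos)]
      have hθle : θ ≤ ρ (∑ i, (S0⁻¹ * cf i) • e (i:ℕ)) := csInf_le hbdd hmem
      have heq2 : (S0 : ℝ) • (∑ i, (S0⁻¹ * cf i) • e (i:ℕ)) = ∑ i, cf i • e (i:ℕ) := by
        rw [Finset.smul_sum]
        refine Finset.sum_congr rfl (fun i _ => ?_)
        rw [smul_smul, mul_inv_cancel_left₀ (ne_of_gt hS0pos)]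
      have heq : ρ (∑ i, cf i • e (i:ℕ)) = S0 * ρ (∑ i, (S0⁻¹ * cf i) • e (i:ℕ)) := by
        rw [← heq2, map_smul_eq_mul, Real.norm_of_nonneg (le_of_lt hS0pos)]
      rw [heq]
      calc θ * S0 = S0 * θ := mul_comm _ _
        _ ≤ S0 * ρ (∑ i, (S0⁻¹ * cf i) • e (i:ℕ)) :=
            mul_le_mul_of_nonneg_left hθle (le_of_lt hS0pos)
  -- choose an almost-minimal normalized block
  obtain ⟨r, hrS, hrlt⟩ : ∃ r ∈ S, r < θ + ε * θ / 4 :=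
    exists_lt_of_csInf_lt hSne (by nlinarith)
  obtain ⟨n, b0, hb1, hru⟩ := hrS
  have hn : n ≠ 0 := by
    rintro rfl
    simp at hb1
  obtain ⟨d', rfl⟩ : ∃ d', n = d' + 1 := ⟨n - 1, by omega⟩
  have hbabs : ∀ i, |b0 i| ≤ 1 := by
    intro i
    rw [← hb1]
    exact Finset.single_le_sum (f := fun i => |b0 i|) (fun j _ => abs_nonneg _)
      (Finset.mem_univ i)
  set ru := ρ (∑ i : Fin (d'+1), b0 i • e (i:ℕ)) with hruDef
  have hruS : ru ∈ S := ⟨d'+1, b0, hb1, rfl⟩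
  have hθru : θ ≤ ru := csInf_le hbdd hruS
  have hrult : ru < θ + ε * θ / 4 := by rw [hru]; exact hrlt
  -- choose N
  obtain ⟨N0, hN0⟩ := Metric.tendsto_atTop.mp hδ.2 (ε * θ / 4) (by positivity)
  set N := max N0 1 with hN
  have hN1 : 1 ≤ N := le_max_right _ _
  have hδsmall : ∀ nn ≥ N0, δ nn < ε * θ / 4 := by
    intro nn hnn
    have := hN0 nn hnn
    rwa [Real.dist_eq, sub_zero, abs_of_pos (hδ.1 nn)] at this
  have hδdN : δ ((d'+1) * N) < ε * θ / 4 := by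
    refine hδsmall _ ?_
    calc N0 ≤ N := le_max_left _ _
      _ ≤ (d'+1) * N := Nat.le_mul_of_pos_left _ (by omega)
  set lam := ru + δ ((d'+1) * N) with hlam
  have hδdNpos : 0 < δ ((d'+1) * N) := hδ.1 _
  have hlampos : 0 < lam := by rw [hlam]; linarith
  have hlamθ : θ ≤ lam := by rw [hlam]; linarith
  have hlamlt : lam < θ * (1 + ε / 2) := by rw [hlam]; nlinarith
  -- the linear map T sending e_n to the n-th shifted copy of the block
  set u : ℕ → (ℕ →₀ ℝ) :=
    fun nn => ∑ i : Fin (d'+1), b0 i • e ((i:ℕ) + (d'+1) * nn) with hu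
  set T : (ℕ →₀ ℝ) →ₗ[ℝ] (ℕ →₀ ℝ) :=
    (Finsupp.lsum ℝ (fun nn => LinearMap.toSpanSingleton ℝ (ℕ →₀ ℝ) (u nn))) with hT
  have hTsingle : ∀ (nn : ℕ) (r0 : ℝ), T (Finsupp.single nn r0) = r0 • u nn := by
    intro nn r0
    rw [hT]
    simp [LinearMap.toSpanSingleton_apply]
  set ρ' : Seminorm ℝ (ℕ →₀ ℝ) := ρ.comp (lam⁻¹ • T) with hρ'
  have hρ'app : ∀ v, ρ' v = lam⁻¹ * ρ (T v) := by
    intro v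
    rw [hρ', Seminorm.comp_apply, LinearMap.smul_apply, map_smul_eq_mul,
      Real.norm_eq_abs, abs_of_pos (inv_pos.mpr hlampos)]
  have hTsum : ∀ (nn : ℕ) (a : Fin nn → ℝ),
      T (∑ j, a j • e (j:ℕ)) =
        ∑ j : Fin nn, ∑ i : Fin (d'+1), (a j * b0 i) • e ((i:ℕ) + (d'+1) * (j:ℕ)) := by
    intro nn a
    rw [map_sum]
    refine Finset.sum_congr rfl (fun j _ => ?_)
    have h2 : T (e ((j:Fin nn):ℕ)) = u ((j:Fin nn):ℕ) := (hTsingle _ 1).trans (one_smul ℝ _)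
    rw [map_smul, h2, hu]
    simp only []
    rw [Finset.smul_sum]
    refine Finset.sum_congr rfl (fun i _ => ?_)
    rw [smul_smul]
  -- definition of y
  set z : (Fin k → ℕ) → Fin k → ℕ :=
    fun s => if StrictMono s then s else fun t => (t:ℕ) with hz
  have hzmono : ∀ s, StrictMono (z s) := by
    intro s
    rw [hz]
    simp only
    split
    · assumption
    · exact fun a b h => h
  set w : (Fin k → ℕ) → X :=
    fun s => ∑ i : Fin (d'+1), b0 i • x (fun t => M ((d'+1) * (s t + N) + (i:ℕ))) with hw
  set y : (Fin k → ℕ) → X := fun s => lam⁻¹ • w (z s) with hy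
  -- norm estimate for strictly monotone s
  have hwbound : ∀ s : Fin k → ℕ, StrictMono s → |‖w s‖ - ru| ≤ δ ((d'+1) * N) := by
    intro s hs
    have hml : d' ≤ (d'+1) * N := by
      calc d' ≤ d' + 1 := by omega
        _ = (d'+1) * 1 := by omega
        _ ≤ (d'+1) * N := Nat.mul_le_mul_left _ hN1
    have := hgen d' ((d'+1) * N) hml
      (fun i t => M ((d'+1) * (s t + N) + (i:ℕ))) ?_ ?_ b0 ?_
    · exact this
    · refine ⟨?_, ?_, ?_⟩
      · intro j
        refine ⟨fun t t' htt => hM (step_lem _ _ j.isLt (by simp [Nat.add_lt_add_right, hs htt, Nat.add_lt_add_right])), fun t => ⟨_, rfl⟩⟩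
      · intro t j j' hjj
        exact hM (Nat.add_lt_add_left (Fin.lt_def.mp hjj) _)
      · intro t ht j j'
        refine hM (step_lem _ _ j.isLt ?_)
        have : s t < s ⟨(t:ℕ)+1, ht⟩ := hs (by simp [Fin.lt_def])
        omega
    · intro j i
      refine hM.monotone ?_
      have : (d'+1) * N ≤ (d'+1) * (s i + N) := Nat.mul_le_mul_left _ (by omega)
      omega
    · intro j
      exact Set.mem_Icc.mpr (abs_le.mp (hbabs j))
  have hynorm : ∀ s : Fin k → ℕ, 1 - ε ≤ ‖y s‖ ∧ ‖y s‖ ≤ 1 := by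
    intro s
    have hb := abs_le.mp (hwbound (z s) (hzmono s))
    have hnorm : ‖y s‖ = lam⁻¹ * ‖w (z s)‖ := by
      rw [hy]
      simp only
      rw [norm_smul, Real.norm_eq_abs, abs_of_pos (inv_pos.mpr hlampos)]
    constructor
    · rw [hnorm]
      have h1 : lam * (1 - ε) ≤ ‖w (z s)‖ := by nlinarith
      exact (le_inv_mul_iff₀ hlampos).mpr h1
    · rw [hnorm]
      have h1 : ‖w (z s)‖ ≤ lam := by rw [hlam]; linarith
      calc lam⁻¹ * ‖w (z s)‖ ≤ lam⁻¹ * lam :=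
            mul_le_mul_of_nonneg_left h1 (le_of_lt (inv_pos.mpr hlampos))
        _ = 1 := inv_mul_cancel₀ (ne_of_gt hlampos)
  refine ⟨y, hynorm, ρ', fun l => lam⁻¹ * δ ((d'+1) * (l + N)), ⟨?_, ?_⟩, ?_, ?_⟩
  · intro nn
    exact mul_pos (inv_pos.mpr hlampos) (hδ.1 _)
  · have h1 : Filter.Tendsto (fun l => (d'+1) * (l + N)) Filter.atTop Filter.atTop := by
      refine Filter.tendsto_atTop_mono (f := id) (fun l => ?_) Filter.tendsto_id
      calc id l ≤ l + N := Nat.le_add_right _ _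
        _ ≤ (d'+1) * (l + N) := Nat.le_mul_of_pos_left _ (by omega)
    have h2 := hδ.2.comp h1
    have h3 := h2.const_mul lam⁻¹
    simpa using h3
  · -- Generates
    intro m l hml p hp hpl a ha
    -- ℕ-valued coefficient/index functions
    set cA : ℕ → ℝ := fun j => if h : j < m + 1 then a ⟨j, h⟩ else 0 with hcA
    set cB : ℕ → ℝ := fun i => if h : i < d' + 1 then b0 ⟨i, h⟩ else 0 with hcB
    set cP : ℕ → Fin k → ℕ :=
      fun j => if h : j < m + 1 then p ⟨j, h⟩ else p ⟨0, Nat.succ_pos m⟩ with hcP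
    set m' : ℕ := m * (d'+1) + d' with hm'
    have hm'1 : m' + 1 = (m+1) * (d'+1) := by rw [hm']; ring
    set l' : ℕ := (d'+1) * (l + N) with hl'
    have hm'l' : m' ≤ l' := by
      have h2 : (m+1) * (d'+1) ≤ (d'+1) * (l+N) := by
        calc (m+1) * (d'+1) = (d'+1) * (m+1) := Nat.mul_comm _ _
          _ ≤ (d'+1) * (l+N) := Nat.mul_le_mul_left _ (by omega)
      have h3 : m' + 1 ≤ (d'+1) * (l+N) := hm'1 ▸ h2
      rw [hl']
      exact Nat.le_of_succ_le h3
    -- properties of cP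
    have hcPmono : ∀ jn : ℕ, StrictMono (cP jn) := by
      intro jn
      simp only [hcP]
      split
      · exact (hp.1 _).1
      · exact (hp.1 _).1
    have hcPl : ∀ (jn : ℕ) (t : Fin k), l ≤ cP jn t := by
      intro jn t
      simp only [hcP]
      split
      · exact hpl _ t
      · exact hpl _ t
    have hcPlt : ∀ j1 j2 : ℕ, j1 < j2 → j2 < m + 1 → ∀ t : Fin k, cP j1 t < cP j2 t := by
      intro j1 j2 h12 h2m t
      simp only [hcP, dif_pos (lt_trans h12 h2m), dif_pos h2m]
      exact hp.2.1 t (show (⟨j1, lt_trans h12 h2m⟩ : Fin (m+1)) < ⟨j2, h2m⟩ from h12)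
    have hcPcross : ∀ (j1 j2 : ℕ), j1 < m + 1 → j2 < m + 1 →
        ∀ (t : Fin k) (ht : (t:ℕ) + 1 < k), cP j1 t < cP j2 ⟨(t:ℕ)+1, ht⟩ := by
      intro j1 j2 h1m h2m t ht
      simp only [hcP, dif_pos h1m, dif_pos h2m]
      exact hp.2.2 t ht _ _
    -- define the long plegma family
    set a' : Fin (m'+1) → ℝ :=
      fun w0 => cA ((w0:ℕ)/(d'+1)) * cB ((w0:ℕ) % (d'+1)) with ha'
    set q : Fin (m'+1) → Fin k → ℕ :=
      fun w0 t => M ((d'+1) * (cP ((w0:ℕ)/(d'+1)) t + N) + (w0:ℕ) % (d'+1)) with hqdef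
    have hdm1 : ∀ w0 : Fin (m'+1), (w0:ℕ)/(d'+1) < m + 1 := by
      intro w0
      have hw := w0.isLt
      have hw2 : (w0:ℕ) < (m+1)*(d'+1) := lt_of_lt_of_eq hw hm'1
      exact (Nat.div_lt_iff_lt_mul (by omega)).mpr hw2
    have hdm2 : ∀ w0 : Fin (m'+1), (w0:ℕ) % (d'+1) < d'+1 := fun w0 => Nat.mod_lt _ (by omega)
    have hsplit : ∀ w0 : Fin (m'+1),
        (w0:ℕ) = (d'+1) * ((w0:ℕ)/(d'+1)) + (w0:ℕ) % (d'+1) :=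
      fun w0 => (Nat.div_add_mod (w0:ℕ) (d'+1)).symm
    -- plegma property
    have hqplegma : IsPlegma (Set.range M) q := by
      refine ⟨?_, ?_, ?_⟩
      · intro w0
        constructor
        · intro t t' htt
          simp only [hqdef]
          exact hM (step_lem _ _ (hdm2 w0)
            (by have := hcPmono ((w0:ℕ)/(d'+1)) htt; omega))
        · intro t; exact ⟨_, rfl⟩
      · intro t w0 w0' hww
        simp only [hqdef]
        have hjle : (w0:ℕ)/(d'+1) ≤ (w0':ℕ)/(d'+1) :=
          Nat.div_le_div_right (le_of_lt hww)
        rcases eq_or_lt_of_le hjle with heq | hlt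
        · have hrlt' : (w0:ℕ) % (d'+1) < (w0':ℕ) % (d'+1) := by
            have h1 := hsplit w0
            have h2 := hsplit w0'
            have h3 : (w0:ℕ) < (w0':ℕ) := hww
            rw [← heq] at h2
            omega
          rw [← heq]
          exact hM (Nat.add_lt_add_left hrlt' _)
        · exact hM (step_lem _ _ (hdm2 w0)
            (by have := hcPlt _ _ hlt (hdm1 w0') t; omega))
      · intro t ht w0 w0'
        simp only [hqdef]
        exact hM (step_lem _ _ (hdm2 w0)
          (by have := hcPcross _ _ (hdm1 w0) (hdm1 w0') t ht; omega))
    have hqbound : ∀ (w0 : Fin (m'+1)) (t : Fin k), M l' ≤ q w0 t := by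
      intro w0 t
      simp only [hqdef]
      refine hM.monotone ?_
      rw [hl']
      have h1 : (d'+1) * (l + N) ≤ (d'+1) * (cP ((w0:ℕ)/(d'+1)) t + N) :=
        Nat.mul_le_mul_left _ (by have := hcPl ((w0:ℕ)/(d'+1)) t; omega)
      omega
    have ha'mem : ∀ w0 : Fin (m'+1), a' w0 ∈ Set.Icc (-1:ℝ) 1 := by
      intro w0
      rw [Set.mem_Icc, ← abs_le]
      simp only [ha', abs_mul]
      have h1 : |cA ((w0:ℕ)/(d'+1))| ≤ 1 := by
        simp only [hcA]
        split
        · rcases Set.mem_Icc.mp (ha _) with ⟨hl1, hr1⟩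
          rw [abs_le]; constructor <;> assumption
        · simp
      have h2 : |cB ((w0:ℕ) % (d'+1))| ≤ 1 := by
        simp only [hcB]
        split
        · exact hbabs _
        · simp
      exact mul_le_one₀ h1 (abs_nonneg _) h2
    have hkey := hgen m' l' hm'l' q hqplegma hqbound a' ha'mem
    -- rewrite the x-side
    set F : ℕ → X := fun w0 => (cA (w0/(d'+1)) * cB (w0 % (d'+1))) •
      x (fun t => M ((d'+1) * (cP (w0/(d'+1)) t + N) + w0 % (d'+1))) with hF
    have hright : ∑ w0 : Fin (m'+1), a' w0 • x (q w0)
        = ∑ j : Fin (m+1), ∑ i : Fin (d'+1),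
            (a j * b0 i) • x (fun t => M ((d'+1) * (p j t + N) + (i:ℕ))) := by
      have h1 : ∑ w0 : Fin (m'+1), a' w0 • x (q w0) = ∑ w0 : Fin (m'+1), F (w0:ℕ) := by
        simp only [ha', hqdef, hF]
      rw [h1, sum_fin_ext hm'1 F, sum_fin_mul (m+1) (d'+1) F]
      refine Finset.sum_congr rfl fun j _ => Finset.sum_congr rfl fun i _ => ?_
      simp only [hF]
      rw [div_of_lt' _ _ _ i.isLt, mod_of_lt' _ _ _ i.isLt]
      simp only [hcA, hcB, hcP, dif_pos j.isLt, dif_pos i.isLt, Fin.eta]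
    have hyformula : ∀ j : Fin (m+1), y (p j) = lam⁻¹ •
        ∑ i : Fin (d'+1), b0 i • x (fun t => M ((d'+1) * (p j t + N) + (i:ℕ))) := by
      intro j
      simp only [hy, hz, hw, if_pos (hp.1 j).1]
    have hleft : ∑ j : Fin (m+1), a j • y (p j)
        = lam⁻¹ • ∑ j : Fin (m+1), ∑ i : Fin (d'+1),
            (a j * b0 i) • x (fun t => M ((d'+1) * (p j t + N) + (i:ℕ))) := by
      rw [Finset.smul_sum]
      refine Finset.sum_congr rfl fun j _ => ?_
      rw [hyformula j, smul_comm (a j) lam⁻¹]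
      congr 1
      rw [Finset.smul_sum]
      exact Finset.sum_congr rfl fun i _ => smul_smul _ _ _
    have hSxy : ∑ j : Fin (m+1), a j • y (p j)
        = lam⁻¹ • ∑ w0 : Fin (m'+1), a' w0 • x (q w0) := by
      rw [hleft, hright]
    -- rewrite the e-side
    set G : ℕ → (ℕ →₀ ℝ) := fun w0 => (cA (w0/(d'+1)) * cB (w0 % (d'+1))) • e w0 with hG
    have heside : ∑ w0 : Fin (m'+1), a' w0 • e ((w0 : Fin (m'+1)):ℕ)
        = T (∑ j : Fin (m+1), a j • e ((j : Fin (m+1)):ℕ)) := by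
      have h1 : ∑ w0 : Fin (m'+1), a' w0 • e ((w0 : Fin (m'+1)):ℕ)
          = ∑ w0 : Fin (m'+1), G (w0:ℕ) := by
        simp only [ha', hG]
      rw [h1, sum_fin_ext hm'1 G, sum_fin_mul (m+1) (d'+1) G, hTsum]
      refine Finset.sum_congr rfl fun j _ => Finset.sum_congr rfl fun i _ => ?_
      simp only [hG]
      rw [div_of_lt' _ _ _ i.isLt, mod_of_lt' _ _ _ i.isLt]
      simp only [hcA, hcB, dif_pos j.isLt, dif_pos i.isLt, Fin.eta]
    show |‖∑ j : Fin (m+1), a j • y (p j)‖ -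
        ρ' (∑ j : Fin (m+1), a j • e ((j : Fin (m+1)):ℕ))| ≤ lam⁻¹ * δ ((d'+1) * (l + N))
    rw [hSxy, hρ'app, ← heside, norm_smul, Real.norm_eq_abs,
      abs_of_pos (inv_pos.mpr hlampos), ← mul_sub, abs_mul,
      abs_of_pos (inv_pos.mpr hlampos), ← hl']
    exact mul_le_mul_of_nonneg_left hkey (inv_pos.mpr hlampos).le
  · -- LowerL1
    intro nn a
    show (1 - ε) * ∑ i, |a i| ≤ ρ' (∑ i : Fin nn, a i • e ((i : Fin nn) : ℕ))
    set cA : ℕ → ℝ := fun j => if h : j < nn then a ⟨j, h⟩ else 0 with hcA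
    set cB : ℕ → ℝ := fun i => if h : i < d' + 1 then b0 ⟨i, h⟩ else 0 with hcB
    set G : ℕ → (ℕ →₀ ℝ) := fun w0 => (cA (w0/(d'+1)) * cB (w0 % (d'+1))) • e w0 with hG
    have hsum1 : ∑ w0 : Fin (nn * (d'+1)), G (w0:ℕ) = T (∑ i : Fin nn, a i • e (i:ℕ)) := by
      rw [hTsum, sum_fin_mul nn (d'+1) G]
      refine Finset.sum_congr rfl fun j _ => Finset.sum_congr rfl fun i _ => ?_
      simp only [hG]
      rw [div_of_lt' _ _ _ i.isLt, mod_of_lt' _ _ _ i.isLt]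
      simp only [hcA, hcB, dif_pos j.isLt, dif_pos i.isLt, Fin.eta]
    have hsum2 : ∑ w0 : Fin (nn * (d'+1)), |cA ((w0:ℕ)/(d'+1)) * cB ((w0:ℕ) % (d'+1))|
        = ∑ i : Fin nn, |a i| := by
      rw [sum_fin_mul nn (d'+1)
        (fun w0 => |cA (w0/(d'+1)) * cB (w0 % (d'+1))|)]
      refine Finset.sum_congr rfl fun j _ => ?_
      have hterm : ∀ i : Fin (d'+1),
          |cA (((i:ℕ) + (d'+1) * (j:ℕ))/(d'+1)) * cB (((i:ℕ) + (d'+1) * (j:ℕ)) % (d'+1))|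
            = |a j| * |b0 i| := by
        intro i
        rw [div_of_lt' _ _ _ i.isLt, mod_of_lt' _ _ _ i.isLt]
        simp only [hcA, hcB, dif_pos j.isLt, dif_pos i.isLt, Fin.eta]
        rw [abs_mul]
      rw [Finset.sum_congr rfl (fun i _ => hterm i), ← Finset.mul_sum, hb1, mul_one]
    have hkey := hθkey (nn * (d'+1)) (fun w0 => cA ((w0:ℕ)/(d'+1)) * cB ((w0:ℕ) % (d'+1)))
    have hGeq : ∑ w0 : Fin (nn * (d'+1)),
        (cA ((w0:ℕ)/(d'+1)) * cB ((w0:ℕ) % (d'+1))) • e ((w0 : Fin (nn * (d'+1))):ℕ)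
          = ∑ w0 : Fin (nn * (d'+1)), G (w0:ℕ) := by
      simp only [hG]
    rw [hGeq, hsum1, hsum2] at hkey
    rw [hρ'app]
    have hSa : (0:ℝ) ≤ ∑ i, |a i| := Finset.sum_nonneg fun i _ => abs_nonneg _
    rcases le_or_gt (1 - ε) 0 with h1 | h1
    · have h2 : (1-ε) * ∑ i, |a i| ≤ 0 := mul_nonpos_of_nonpos_of_nonneg h1 hSa
      have h3 : (0:ℝ) ≤ lam⁻¹ * ρ (T (∑ i : Fin nn, a i • e (i:ℕ))) :=
        mul_nonneg (inv_pos.mpr hlampos).le (apply_nonneg _ _)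
      linarith
    · refine (le_inv_mul_iff₀ hlampos).mpr ?_
      have hle : lam * (1-ε) ≤ θ := arith1 hθpos hε h1 hlamlt
      calc lam * ((1-ε) * ∑ i, |a i|) = (lam * (1-ε)) * ∑ i, |a i| := by ring
        _ ≤ θ * ∑ i, |a i| := mul_le_mul_of_nonneg_right hle hSa
        _ ≤ ρ (T (∑ i : Fin nn, a i • e (i:ℕ))) := hkey
end

section
/- Let δ > 0 and k, l ∈ ℕ. Then there exists n_0 ∈ ℕ such that for every n ≥ n_0 and every subset A of [{1, …, n}]^k (the k-element subsets of {1, …, n}) of size at least δ·C(n, k) (where C(n, k) is the binomial coefficient), there exists a plegma family (s_j)_{j=1}^l in [ℕ]^k with s_j ∈ A for every 1 ≤ j ≤ l. -/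
/-!
Split a plegma-free family `A` of increasing `(K+1)`-tuples in `{1, …, n}` according to whether
all consecutive gaps are at least `g`. Tuples with some gap below `g` number at most `K g n^K`.
Two tuples with all gaps at least `g`, the same offsets from their first entry and first entries
in the same block `[q g, (q+1) g)` are translates of each other by less than their smallest gap,
so any `l` such tuples form a plegma family. There are at most `(n/g + 1) n^K` such classes, each
of size below `l`, so `|A| ≤ n^K (K g + l (n/g + 1))`. For a large constant `g` and large `n` this
is below `δ n^{K+1} / (2^{K+1} (K+1)!) ≤ δ C(n, K+1)`.
-/

open Finset

namespace Plegma

variable {K l g n : ℕ}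

def offsets (s : Fin (K + 1) → ℕ) : Fin K → ℕ := fun i => s i.succ - s 0

def Separated (g : ℕ) (s : Fin (K + 1) → ℕ) : Prop :=
  ∀ i : Fin K, s i.castSucc + g ≤ s i.succ

instance : DecidablePred (Separated (K := K) g) := fun s =>
  inferInstanceAs (Decidable (∀ i : Fin K, s i.castSucc + g ≤ s i.succ))

lemma sub_zero_eq_of_offsets_eq {s t : Fin (K + 1) → ℕ} (h : offsets s = offsets t)
    (i : Fin (K + 1)) : s i - s 0 = t i - t 0 := by
  cases i using Fin.cases with
  | zero => simp
  | succ i => exact congrFun h i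

lemma eq_of_offsets_eq {s t : Fin (K + 1) → ℕ} (hs : Monotone s) (ht : Monotone t)
    (h : offsets s = offsets t) (h0 : s 0 = t 0) : s = t := by
  funext i
  have := sub_zero_eq_of_offsets_eq h i
  have := hs (Fin.zero_le i)
  have := ht (Fin.zero_le i)
  omega

lemma isPlegma_of_offsets_eq (p : Fin l → Fin (K + 1) → ℕ) (hp : ∀ j, StrictMono (p j))
    (hoff : ∀ j j', offsets (p j) = offsets (p j')) (h0 : StrictMono fun j => p j 0)
    (hclose : ∀ j j', p j 0 < p j' 0 + g) (hsep : ∀ j, Separated g (p j)) :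
    IsPlegma Set.univ p := by
  have hle : ∀ j i, p j 0 ≤ p j i := fun j i => (hp j).monotone (Fin.zero_le i)
  refine ⟨fun j => ⟨hp j, fun _ => trivial⟩, fun i a b hab => ?_, fun i hi j j' => ?_⟩
  · show p a i < p b i
    have := sub_zero_eq_of_offsets_eq (hoff a b) i
    have : p a 0 < p b 0 := h0 hab
    have := hle a i
    have := hle b i
    omega
  · let i' : Fin K := ⟨i, by omega⟩
    show p j i'.castSucc < p j' i'.succ
    have := sub_zero_eq_of_offsets_eq (hoff j j') i'.castSucc
    have := hsep j' i'
    have := hclose j j'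
    have := hle j i'.castSucc
    have := hle j' i'.castSucc
    omega

lemma exists_isPlegma_of_le_card (F : Finset (Fin (K + 1) → ℕ))
    (hF : ∀ s ∈ F, StrictMono s ∧ Separated g s)
    (hoff : ∀ s ∈ F, ∀ t ∈ F, offsets s = offsets t)
    (hclose : ∀ s ∈ F, ∀ t ∈ F, s 0 < t 0 + g) (hl : l ≤ #F) :
    ∃ p : Fin l → Fin (K + 1) → ℕ, IsPlegma Set.univ p ∧ ∀ j, p j ∈ F := by
  classical
  have hinj : Set.InjOn (fun s : Fin (K + 1) → ℕ => s 0) F := fun s hs t ht =>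
    eq_of_offsets_eq (hF s hs).1.monotone (hF t ht).1.monotone (hoff s hs t ht)
  obtain ⟨Z, hZ, hZl⟩ := exists_subset_card_eq (hl.trans_eq (card_image_of_injOn hinj).symm)
  have hmem : ∀ j : Fin l, ∃ s ∈ F, s 0 = Z.orderEmbOfFin hZl j := fun j =>
    mem_image.mp (hZ (Z.orderEmbOfFin_mem hZl j))
  choose p hpF hp0 using hmem
  refine ⟨p, isPlegma_of_offsets_eq p (fun j => (hF _ (hpF j)).1)
    (fun j j' => hoff _ (hpF j) _ (hpF j')) ?_ (fun j j' => hclose _ (hpF j) _ (hpF j'))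
    (fun j => (hF _ (hpF j)).2), hpF⟩
  intro a b hab
  simpa only [hp0] using (Z.orderEmbOfFin hZl).strictMono hab

section Counting

variable (A : Finset (Fin (K + 1) → ℕ))
  (hA : ∀ s ∈ A, StrictMono s ∧ ∀ i, s i ∈ Icc 1 n)
include hA

lemma card_filter_gap_lt_le (i : Fin K) :
    #{s ∈ A | s i.succ < s i.castSucc + g} ≤ g * n ^ K := by
  have hcard : #(range g ×ˢ Fintype.piFinset fun _ : Fin K => Icc 1 n) = g * n ^ K := by simp
  rw [← hcard]
  -- `s` is recovered from its `i`-th gap and the tuple with entry `i + 1` deleted.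
  have hsucc : ∀ s : Fin (K + 1) → ℕ, Fin.removeNth i.succ s i = s i.castSucc := fun s => by
    simp [Fin.removeNth_apply, Fin.succAbove_of_castSucc_lt _ _ (Fin.castSucc_lt_succ (i := i))]
  refine card_le_card_of_injOn (fun s => (s i.succ - s i.castSucc, Fin.removeNth i.succ s))
    (fun s hs => ?_) (fun s hs t ht h => ?_)
  · obtain ⟨hsA, hsg⟩ := mem_filter.mp hs
    simp only [coe_product, Set.mem_prod, mem_coe, mem_range, Fintype.mem_piFinset]
    have := (hA s hsA).1 (Fin.castSucc_lt_succ (i := i))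
    exact ⟨by omega, fun j => (hA s hsA).2 _⟩
  · obtain ⟨hgap, hrem⟩ := Prod.mk.inj h
    have hcast : s i.castSucc = t i.castSucc := by rw [← hsucc s, ← hsucc t, hrem]
    have := (hA s (mem_filter.mp hs).1).1 (Fin.castSucc_lt_succ (i := i))
    have := (hA t (mem_filter.mp ht).1).1 (Fin.castSucc_lt_succ (i := i))
    have hsucc_eq : s i.succ = t i.succ := by omega
    rw [← Fin.insertNth_self_removeNth i.succ s, ← Fin.insertNth_self_removeNth i.succ t, hrem,
      hsucc_eq]

lemma card_filter_not_separated_le : #{s ∈ A | ¬ Separated g s} ≤ K * (g * n ^ K) := by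
  classical
  calc #{s ∈ A | ¬ Separated g s}
      ≤ #(univ.biUnion fun i : Fin K => {s ∈ A | s i.succ < s i.castSucc + g}) := by
        refine card_le_card fun s hs => ?_
        simp only [mem_filter, Separated, not_forall, not_le] at hs
        simpa using hs
    _ ≤ ∑ i : Fin K, #{s ∈ A | s i.succ < s i.castSucc + g} := card_biUnion_le
    _ ≤ ∑ _i : Fin K, g * n ^ K := sum_le_sum fun i _ => card_filter_gap_lt_le A hA i
    _ = K * (g * n ^ K) := by simp

lemma card_filter_separated_le (hg : 0 < g)
    (hfree : ¬ ∃ p : Fin l → Fin (K + 1) → ℕ, IsPlegma Set.univ p ∧ ∀ j, p j ∈ A) :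
    #{s ∈ A | Separated g s} ≤ l * ((n / g + 1) * n ^ K) := by
  classical
  set W := {s ∈ A | Separated g s}
  have hcard : #(range (n / g + 1) ×ˢ Fintype.piFinset fun _ : Fin K => range n) =
      (n / g + 1) * n ^ K := by simp
  rw [← hcard]
  refine card_le_mul_card_image_of_maps_to (f := fun s => (s 0 / g, offsets s))
    (fun s hs => ?_) l (fun b _ => ?_)
  · have hs := (hA s (mem_filter.mp hs).1).2
    have h0 := mem_Icc.mp (hs 0)
    simp only [mem_product, mem_range, Fintype.mem_piFinset, offsets]
    refine ⟨Nat.lt_succ_of_le (Nat.div_le_div_right h0.2), fun i => ?_⟩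
    have := mem_Icc.mp (hs i.succ)
    omega
  by_contra! hlarge
  set F := {s ∈ W | (s 0 / g, offsets s) = b}
  have hkey : ∀ s ∈ F, ∀ t ∈ F, s 0 / g = t 0 / g ∧ offsets s = offsets t :=
    fun s hs t ht => Prod.mk.inj ((mem_filter.mp hs).2.trans (mem_filter.mp ht).2.symm)
  have hclose : ∀ s ∈ F, ∀ t ∈ F, s 0 < t 0 + g := by
    intro s hs t ht
    have hdiv := (hkey s hs t ht).1
    have := Nat.div_add_mod (s 0) g
    have := Nat.div_add_mod (t 0) g
    have := Nat.mod_lt (s 0) hg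
    rw [hdiv] at *
    omega
  have hF : ∀ s ∈ F, StrictMono s ∧ Separated g s := fun s hs =>
    have hsW := (mem_filter.mp hs).1
    ⟨(hA s (mem_filter.mp hsW).1).1, (mem_filter.mp hsW).2⟩
  obtain ⟨p, hp, hpF⟩ := exists_isPlegma_of_le_card F hF (fun s hs t ht => (hkey s hs t ht).2)
    hclose hlarge.le
  exact hfree ⟨p, hp, fun j => (mem_filter.mp (mem_filter.mp (hpF j)).1).1⟩

lemma card_le_of_not_exists_isPlegma (hg : 0 < g)
    (hfree : ¬ ∃ p : Fin l → Fin (K + 1) → ℕ, IsPlegma Set.univ p ∧ ∀ j, p j ∈ A) :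
    #A ≤ n ^ K * (K * g + l * (n / g + 1)) := by
  rw [← card_filter_add_card_filter_not (Separated g)]
  have := card_filter_separated_le A hA hg hfree
  have := card_filter_not_separated_le (g := g) A hA
  nlinarith

end Counting

lemma exists_card_lt_of_not_exists_isPlegma (ε : ℝ) (hε : 0 < ε) (K l : ℕ) :
    ∃ n₀ : ℕ, ∀ n ≥ n₀, ∀ A : Finset (Fin (K + 1) → ℕ),
      (∀ s ∈ A, StrictMono s ∧ ∀ i, s i ∈ Icc 1 n) →
      (¬ ∃ p : Fin l → Fin (K + 1) → ℕ, IsPlegma Set.univ p ∧ ∀ j, p j ∈ A) →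
      (#A : ℝ) < ε * n ^ (K + 1) := by
  obtain ⟨g, hg⟩ := exists_nat_gt (2 * l / ε)
  have hg0 : (0 : ℝ) < g := lt_of_le_of_lt (by positivity) hg
  obtain ⟨n₀, hn₀⟩ := exists_nat_gt (2 * (K * g + l) / ε)
  refine ⟨n₀, fun n hn A hA hfree => ?_⟩
  have hn : 2 * (K * g + l) / ε < n := hn₀.trans_le (by exact_mod_cast hn)
  have hn0 : (0 : ℝ) < n := lt_of_le_of_lt (by positivity) hn
  have hbound : (#A : ℝ) ≤ n ^ K * (K * g + l * ((n : ℝ) / g + 1)) := by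
    have h := card_le_of_not_exists_isPlegma A hA (by exact_mod_cast hg0) hfree
    have hdiv : ((n / g : ℕ) : ℝ) ≤ n / g := Nat.cast_div_le
    calc (#A : ℝ) ≤ ((n ^ K * (K * g + l * (n / g + 1)) : ℕ) : ℝ) := by exact_mod_cast h
      _ ≤ _ := by push_cast; gcongr
  have hsmall : K * g + l < ε * n / 2 := by
    rw [div_lt_iff₀ hε] at hn
    linarith
  have hwide : l * ((n : ℝ) / g) ≤ ε * n / 2 := by
    rw [div_lt_iff₀ hε] at hg
    rw [mul_div_assoc', div_le_div_iff₀ hg0 two_pos]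
    nlinarith
  calc (#A : ℝ) ≤ n ^ K * (K * g + l * ((n : ℝ) / g + 1)) := hbound
    _ < n ^ K * (ε * n) := by gcongr; linarith
    _ = ε * n ^ (K + 1) := by ring

end Plegma

lemma Nat.pow_le_two_pow_mul_factorial_mul_choose {n r : ℕ} (h : 2 * r ≤ n + 2) :
    n ^ r ≤ 2 ^ r * r.factorial * n.choose r :=
  calc n ^ r ≤ (2 * (n + 1 - r)) ^ r := Nat.pow_le_pow_left (by omega) r
    _ = 2 ^ r * (n + 1 - r) ^ r := mul_pow ..
    _ ≤ 2 ^ r * (r.factorial * n.choose r) := by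
      rw [← Nat.descFactorial_eq_factorial_mul_choose]
      exact Nat.mul_le_mul_left _ (Nat.pow_sub_le_descFactorial n r)
    _ = 2 ^ r * r.factorial * n.choose r := (mul_assoc ..).symm

/-- density of plegma families. For every `δ > 0` and `k, l ∈ ℕ`
there is `n₀` such that for all `n ≥ n₀`, every family `A` of `k`-element subsets of
`{1, …, n}` with `|A| ≥ δ · (n choose k)` contains a plegma family of length `l`. -/
theorem statement16 (δ : ℝ) (hδ : 0 < δ) (k l : ℕ) :
    ∃ n₀ : ℕ, ∀ n ≥ n₀, ∀ A : Finset (Fin k → ℕ),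
      (∀ s ∈ A, StrictMono s ∧ ∀ i, s i ∈ Finset.Icc 1 n) →
      δ * (n.choose k : ℝ) ≤ (A.card : ℝ) →
      ∃ p : Fin l → Fin k → ℕ, IsPlegma Set.univ p ∧ ∀ j, p j ∈ A := by
  cases k with
  | zero =>
    refine ⟨0, fun n _ A hA hcard => ?_⟩
    have hA0 : (0 : ℝ) < #A := hδ.trans_le (by simpa using hcard)
    obtain ⟨s, hs⟩ : A.Nonempty := card_pos.mp (by exact_mod_cast hA0)
    exact ⟨fun _ => s, ⟨fun _ => ⟨(hA s hs).1, fun _ => trivial⟩, fun i => i.elim0,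
      fun i => i.elim0⟩, fun _ => hs⟩
  | succ K =>
    have hP : (0 : ℝ) < 2 ^ (K + 1) * (K + 1).factorial := by positivity
    obtain ⟨n₀, hn₀⟩ := Plegma.exists_card_lt_of_not_exists_isPlegma
      (δ / (2 ^ (K + 1) * (K + 1).factorial)) (by positivity) K l
    refine ⟨max n₀ (2 * K), fun n hn A hA hcard => ?_⟩
    by_contra hfree
    have hchoose : (n : ℝ) ^ (K + 1) ≤ 2 ^ (K + 1) * (K + 1).factorial * n.choose (K + 1) := by
      exact_mod_cast Nat.pow_le_two_pow_mul_factorial_mul_choose (n := n) (r := K + 1) (by omega)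
    have hlt := hn₀ n (le_of_max_le_left hn) A hA hfree
    rw [div_mul_eq_mul_div, lt_div_iff₀ hP] at hlt
    refine lt_irrefl (δ * n ^ (K + 1)) (lt_of_le_of_lt ?_ hlt)
    calc δ * n ^ (K + 1) ≤ δ * (2 ^ (K + 1) * (K + 1).factorial * n.choose (K + 1)) := by gcongr
      _ = 2 ^ (K + 1) * (K + 1).factorial * (δ * n.choose (K + 1)) := by ring
      _ ≤ #A * (2 ^ (K + 1) * (K + 1).factorial) := by rw [mul_comm]; gcongr
end

section
/- Let X be a Banach space, k ∈ ℕ, and (x_s)_{s∈[ℕ]^k} a bounded k-sequence in X. Let M be an infinite subset of ℕ such that (x_s)_{s∈[M]^k} generates (with respect to some null sequence of positive reals) a k-spreading model (e_n)_n which is Cesàro summable to zero, i.e. ‖(1/n) Σ_{j=1}^n e_j‖_* → 0 as n → ∞. Then for every infinite subset L of M, the k-subsequence (x_s)_{s∈[L]^k} is k-Cesàro summable to zero. -/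
/-- The (enumerations of the) `k`-element subsets of the finite set `F ⊆ ℕ`. -/
def kSubsetEnums (k : ℕ) (F : Finset ℕ) : Finset (Fin k → ℕ) :=
  (Fintype.piFinset fun _ : Fin k => F).filter fun s => ∀ i j : Fin k, i < j → s i < s j

/-- `(x s)_{s ∈ [M]^k}` is `k`-Cesàro summable to `x₀`:
`(n choose k)⁻¹ • ∑_{s ∈ [M|n]^k} x s → x₀` in norm, where `M|n` consists of the first
`n` elements of `M`. -/
def KCesaroSummableTo {X : Type*} [SeminormedAddCommGroup X] [NormedSpace ℝ X]
    {k : ℕ} (M : ℕ → ℕ) (x : (Fin k → ℕ) → X) (x₀ : X) : Prop :=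
  Filter.Tendsto
    (fun n => (n.choose k : ℝ)⁻¹ •
      ∑ s ∈ kSubsetEnums k ((Finset.range n).image M), x s)
    Filter.atTop (nhds x₀)

/-!
Split the increasing `(k + 1)`-tuples in `range n` into lines `b, b + 1, b + 2, …` of translates
of a tuple `b` with `b 0 = 0`. If all gaps of `b` are at least `m + 1`, then `L` maps any `m + 1`
consecutive translates `b + t` with `t ≥ l` to a plegma family in `[M]^k` above `M l`, so their
sum has norm at most `ρ (e 0 + ⋯ + e m) + δ l`. Cutting the line into such blocks bounds its sum
by its length times `ρ ((m + 1)⁻¹ • (e 0 + ⋯ + e m)) + δ l`, up to `O(l m)` terms at the start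
and the end. The line bases and the tuples with a gap `≤ m` are only `O(n ^ k)` many, which is
negligible against `n.choose (k + 1)`.
-/

open Finset Filter

lemma norm_sum_le_card_mul {ι X : Type*} [SeminormedAddCommGroup X] (s : Finset ι) {f : ι → X}
    {C : ℝ} (h : ∀ i ∈ s, ‖f i‖ ≤ C) : ‖∑ i ∈ s, f i‖ ≤ #s * C :=
  (norm_sum_le_of_le s h).trans_eq (by rw [sum_const, nsmul_eq_mul])

lemma mem_kSubsetEnums {k : ℕ} {F : Finset ℕ} {c : Fin k → ℕ} :
    c ∈ kSubsetEnums k F ↔ (∀ i, c i ∈ F) ∧ StrictMono c := by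
  simp only [kSubsetEnums, mem_filter, Fintype.mem_piFinset]
  rfl

lemma card_kSubsetEnums_le (k : ℕ) (F : Finset ℕ) :
    #(kSubsetEnums k F) ≤ (#F).choose k := by
  rw [← card_powersetCard]
  refine card_le_card_of_injOn (fun c => univ.image c) (fun c hc => ?_) (fun c hc c' hc' h => ?_)
  · obtain ⟨hF, hc⟩ := mem_kSubsetEnums.1 hc
    rw [mem_coe, mem_powersetCard]
    refine ⟨image_subset_iff.2 fun i _ => hF i, ?_⟩
    rw [card_image_of_injective _ hc.injective, card_univ, Fintype.card_fin]
  · have hcr : Set.range c = Set.range c' := by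
      simpa only [coe_image, coe_univ, Set.image_univ] using congrArg ((↑) : Finset ℕ → Set ℕ) h
    exact ((mem_kSubsetEnums.1 hc).2.range_inj (mem_kSubsetEnums.1 hc').2).1 hcr

lemma sum_kSubsetEnums_image {X : Type*} [AddCommMonoid X] {k : ℕ} {L : ℕ → ℕ}
    (hL : StrictMono L) (F : Finset ℕ) (f : (Fin k → ℕ) → X) :
    ∑ s ∈ kSubsetEnums k (F.image L), f s = ∑ c ∈ kSubsetEnums k F, f (L ∘ c) := by
  symm
  refine sum_nbij (L ∘ ·) (fun c hc => ?_) (fun c _ c' _ h => ?_) (fun s hs => ?_) (fun _ _ => rfl)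
  · obtain ⟨hF, hc⟩ := mem_kSubsetEnums.1 hc
    exact mem_kSubsetEnums.2 ⟨fun i => mem_image_of_mem L (hF i), hL.comp hc⟩
  · exact funext fun i => hL.injective (congrFun h i)
  · obtain ⟨hF, hs⟩ := mem_kSubsetEnums.1 hs
    choose c hcF hc using fun i => mem_image.1 (hF i)
    refine ⟨c, mem_kSubsetEnums.2 ⟨hcF, fun i j hij => ?_⟩, funext hc⟩
    exact hL.lt_iff_lt.1 (by simpa only [hc] using hs hij)

def HasGapsAtLeast {k : ℕ} (m : ℕ) (c : Fin k → ℕ) : Prop :=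
  ∀ (i : Fin k) (hi : (i : ℕ) + 1 < k), c i + m ≤ c ⟨i + 1, hi⟩

instance {k m : ℕ} : DecidablePred (HasGapsAtLeast (k := k) m) := fun _ => by
  unfold HasGapsAtLeast; infer_instance

lemma hasGapsAtLeast_shift_iff {k m t : ℕ} {c : Fin k → ℕ} :
    HasGapsAtLeast m (fun i => c i + t) ↔ HasGapsAtLeast m c := by
  simp only [HasGapsAtLeast, add_right_comm _ t, add_le_add_iff_right]

lemma isPlegma_shifts {S : Set ℕ} {L : ℕ → ℕ} (hL : StrictMono L) (hLS : Set.range L ⊆ S)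
    {k m : ℕ} {s : Fin k → ℕ} (hs : StrictMono s) (hgap : HasGapsAtLeast m s) :
    IsPlegma S (fun (j : Fin m) i => L (s i + j)) := by
  refine ⟨fun j => ⟨fun i i' hi => hL ?_, fun i => hLS ⟨_, rfl⟩⟩, fun i j j' hj => hL ?_,
    fun i hi j j' => hL ?_⟩
  · exact Nat.add_lt_add_right (hs hi) _
  · exact Nat.add_lt_add_left hj _
  · have := hgap i hi
    have := j.isLt
    omega

section Lines

variable {k : ℕ}

def lineBases (k n : ℕ) : Finset (Fin (k + 1) → ℕ) :=
  (kSubsetEnums (k + 1) (range n)).filter (· 0 = 0)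

lemma mem_lineBases {n : ℕ} {b : Fin (k + 1) → ℕ} :
    b ∈ lineBases k n ↔ ((∀ i, b i < n) ∧ StrictMono b) ∧ b 0 = 0 := by
  simp only [lineBases, mem_filter, mem_kSubsetEnums, mem_range]

theorem sum_kSubsetEnums_eq_sum_lineBases {X : Type*} [AddCommMonoid X] (n : ℕ)
    (f : (Fin (k + 1) → ℕ) → X) :
    ∑ c ∈ kSubsetEnums (k + 1) (range n), f c
      = ∑ b ∈ lineBases k n, ∑ t ∈ range (n - b (Fin.last k)), f (fun i => b i + t) := by
  have h0 : ∀ c ∈ kSubsetEnums (k + 1) (range n), ∀ i, c 0 ≤ c i := fun c hc i =>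
    (mem_kSubsetEnums.1 hc).2.monotone (Fin.zero_le i)
  rw [sum_sigma']
  refine sum_bij' (fun c _ => ⟨fun i => c i - c 0, c 0⟩) (fun p _ i => p.1 i + p.2)
    (fun c hc => ?_) (fun p hp => ?_) (fun c hc => ?_) (fun ⟨b, t⟩ hp => ?_) (fun c hc => ?_)
  · have h0 := h0 c hc
    obtain ⟨hn, hc⟩ := mem_kSubsetEnums.1 hc
    have hlast := mem_range.1 (hn (Fin.last k))
    refine mem_sigma.2 ⟨mem_lineBases.2 ⟨⟨fun i => ?_, fun i j hij => ?_⟩, by simp⟩, ?_⟩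
    · have := mem_range.1 (hn i); grind
    · have := hc hij; grind
    · grind
  · obtain ⟨hb, ht⟩ := mem_sigma.1 hp
    obtain ⟨⟨-, hb⟩, -⟩ := mem_lineBases.1 hb
    have hlast : ∀ i, p.1 i ≤ p.1 (Fin.last k) := fun i => hb.monotone (Fin.le_last i)
    have := mem_range.1 ht
    exact mem_kSubsetEnums.2
      ⟨fun i => mem_range.2 (by grind), fun i j hij => Nat.add_lt_add_right (hb hij) _⟩
  · have h0 := h0 c hc
    funext i
    grind
  · have hb0 : b 0 = 0 := (mem_lineBases.1 (mem_sigma.1 hp).1).2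
    simp [hb0]
  · have h0 := h0 c hc
    congr
    funext i
    grind

lemma sum_lineBases_length (n : ℕ) :
    ∑ b ∈ lineBases k n, (n - b (Fin.last k)) = #(kSubsetEnums (k + 1) (range n)) := by
  rw [card_eq_sum_ones, sum_kSubsetEnums_eq_sum_lineBases]
  simp

lemma card_lineBases_le (n : ℕ) : #(lineBases k n) ≤ n ^ k := by
  refine (card_le_card_of_injOn (t := Fintype.piFinset fun _ : Fin k => range n) Fin.tail
    (fun b hb => ?_) (fun b hb b' hb' h => ?_)).trans_eq (by simp)
  · exact Fintype.mem_piFinset.2 fun i => mem_range.2 ((mem_lineBases.1 hb).1.1 i.succ)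
  · rw [← Fin.cons_self_tail b, ← Fin.cons_self_tail b', h, (mem_lineBases.1 hb).2,
      (mem_lineBases.1 hb').2]

lemma card_filter_not_hasGapsAtLeast_le (m n : ℕ) :
    #((kSubsetEnums (k + 1) (range n)).filter (¬ HasGapsAtLeast m ·)) ≤ k * (m * n ^ k) := by
  set K := kSubsetEnums (k + 1) (range n)
  have hsub : K.filter (¬ HasGapsAtLeast m ·)
      ⊆ univ.biUnion fun i : Fin k => K.filter fun c => c i.succ < c i.castSucc + m := by
    intro c hc
    obtain ⟨hcK, hc⟩ := mem_filter.1 hc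
    simp only [HasGapsAtLeast, not_forall, not_le] at hc
    obtain ⟨i, hi, hlt⟩ := hc
    exact mem_biUnion.2 ⟨⟨i, by omega⟩, mem_univ _, mem_filter.2 ⟨hcK, hlt⟩⟩
  have hgap : ∀ i : Fin k, #(K.filter fun c => c i.succ < c i.castSucc + m) ≤ m * n ^ k := by
    intro i
    refine (card_le_card_of_injOn (t := range m ×ˢ Fintype.piFinset fun _ : Fin k => range n)
      (fun c => (c i.succ - c i.castSucc, Fin.removeNth i.succ c))
      (fun c hc => ?_) (fun c hc c' hc' h => ?_)).trans_eq (by simp)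
    · obtain ⟨hcK, hlt⟩ := mem_filter.1 hc
      have := (mem_kSubsetEnums.1 hcK).2 (Fin.castSucc_lt_succ (i := i))
      exact mem_product.2 ⟨mem_range.2 (show c i.succ - c i.castSucc < m by omega),
        Fintype.mem_piFinset.2 fun j => (mem_kSubsetEnums.1 hcK).1 _⟩
    · have hlt : ∀ c ∈ K, c i.castSucc < c i.succ := fun c hc =>
        (mem_kSubsetEnums.1 hc).2 (Fin.castSucc_lt_succ (i := i))
      obtain ⟨hgap, hrem⟩ : c i.succ - c i.castSucc = c' i.succ - c' i.castSucc ∧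
          Fin.removeNth i.succ c = Fin.removeNth i.succ c' := Prod.ext_iff.1 h
      have hcast : c i.castSucc = c' i.castSucc := by
        simpa only [Fin.removeNth_apply, Fin.succAbove_succ_self] using congrFun hrem i
      have hsucc : c i.succ = c' i.succ := by
        have := hlt c (mem_filter.1 hc).1
        have := hlt c' (mem_filter.1 hc').1
        omega
      rw [← Fin.insertNth_self_removeNth i.succ c, ← Fin.insertNth_self_removeNth i.succ c',
        hsucc, hrem]
  calc #(K.filter (¬ HasGapsAtLeast m ·))
      ≤ ∑ i : Fin k, #(K.filter fun c => c i.succ < c i.castSucc + m) :=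
        (card_le_card hsub).trans card_biUnion_le
    _ ≤ ∑ _i : Fin k, m * n ^ k := sum_le_sum fun i _ => hgap i
    _ = k * (m * n ^ k) := by simp

theorem norm_sum_kSubsetEnums_le {X : Type*} [SeminormedAddCommGroup X] {m : ℕ}
    {y : (Fin (k + 1) → ℕ) → X} {C A D : ℝ} (hC : ∀ c, ‖y c‖ ≤ C) (hA : 0 ≤ A) (hD : 0 ≤ D)
    (hline : ∀ b, StrictMono b → HasGapsAtLeast m b →
      ∀ N : ℕ, ‖∑ t ∈ range N, y (fun i => b i + t)‖ ≤ N * A + D) (n : ℕ) :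
    ‖∑ c ∈ kSubsetEnums (k + 1) (range n), y c‖
      ≤ #(kSubsetEnums (k + 1) (range n)) * A + (D + k * m * C) * n ^ k := by
  set K := kSubsetEnums (k + 1) (range n)
  have hC0 : 0 ≤ C := (norm_nonneg _).trans (hC 0)
  have hgood : ‖∑ c ∈ K.filter (HasGapsAtLeast m), y c‖ ≤ #K * A + D * n ^ k := by
    have hline' : ∀ b ∈ lineBases k n, ‖∑ t ∈ range (n - b (Fin.last k)),
        if HasGapsAtLeast m (fun i => b i + t) then y (fun i => b i + t) else 0‖
          ≤ (n - b (Fin.last k) : ℕ) * A + D := by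
      intro b hb
      simp_rw [hasGapsAtLeast_shift_iff]
      split_ifs with hgap
      · exact hline b (mem_lineBases.1 hb).1.2 hgap _
      · simp only [sum_const_zero, norm_zero]; positivity
    rw [sum_filter, sum_kSubsetEnums_eq_sum_lineBases]
    calc _ ≤ ∑ b ∈ lineBases k n, ((n - b (Fin.last k) : ℕ) * A + D) :=
          (norm_sum_le _ _).trans (sum_le_sum hline')
      _ = #K * A + #(lineBases k n) * D := by
          rw [sum_add_distrib, ← sum_mul, ← Nat.cast_sum, sum_lineBases_length, sum_const,
            nsmul_eq_mul]
      _ ≤ #K * A + n ^ k * D := by gcongr; exact_mod_cast card_lineBases_le n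
      _ = #K * A + D * n ^ k := by ring
  have hbad : ‖∑ c ∈ K.filter (¬ HasGapsAtLeast m ·), y c‖ ≤ k * m * C * n ^ k := by
    calc _ ≤ #(K.filter (¬ HasGapsAtLeast m ·)) * C := norm_sum_le_card_mul _ fun c _ => hC c
      _ ≤ (k * (m * n ^ k) : ℕ) * C := by
          gcongr; exact card_filter_not_hasGapsAtLeast_le m n
      _ = k * m * C * n ^ k := by push_cast; ring
  rw [← sum_filter_add_sum_filter_not K (HasGapsAtLeast m)]
  calc _ ≤ _ := norm_add_le _ _
    _ ≤ #K * A + D * n ^ k + k * m * C * n ^ k := add_le_add hgood hbad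
    _ = _ := by ring

end Lines

lemma sum_range_mul_eq_sum_blocks {X : Type*} [AddCommMonoid X] (v : ℕ → X) (Q m : ℕ) :
    ∑ t ∈ range (Q * m), v t = ∑ q ∈ range Q, ∑ r ∈ range m, v (q * m + r) := by
  induction Q with
  | zero => simp
  | succ Q ih => rw [sum_range_succ, ← ih, Nat.succ_mul, sum_range_add]

theorem norm_sum_range_le_of_blocks {X : Type*} [SeminormedAddCommGroup X] {v : ℕ → X}
    {C B : ℝ} {m l : ℕ} (hm : 0 < m) (hC : ∀ t, ‖v t‖ ≤ C)
    (hblock : ∀ q, l ≤ q → ‖∑ r ∈ range m, v (q * m + r)‖ ≤ B) (N : ℕ) :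
    ‖∑ t ∈ range N, v t‖ ≤ N / m * B + (l + 1) * m * C := by
  set Q := N / m
  have hB : 0 ≤ B := (norm_nonneg _).trans (hblock l le_rfl)
  have hC0 : 0 ≤ C := (norm_nonneg _).trans (hC 0)
  have hblocks : ‖∑ t ∈ range (Q * m), v t‖ ≤ N / m * B + l * m * C := by
    rw [sum_range_mul_eq_sum_blocks, ← sum_filter_add_sum_filter_not _ (l ≤ ·)]
    refine (norm_add_le _ _).trans (add_le_add ?_ ?_)
    · calc _ ≤ #((range Q).filter (l ≤ ·)) * B :=
            norm_sum_le_card_mul _ fun q hq => hblock q (mem_filter.1 hq).2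
        _ ≤ Q * B := by gcongr; exact_mod_cast (card_filter_le _ _).trans (card_range Q).le
        _ ≤ N / m * B := by gcongr; exact Nat.cast_div_le
    · calc _ ≤ #((range Q).filter (¬ l ≤ ·)) * (m * C) :=
            norm_sum_le_card_mul _ fun q _ => (norm_sum_le_card_mul _ fun r _ => hC _).trans_eq
              (by rw [card_range])
        _ ≤ l * (m * C) := by
            gcongr
            exact_mod_cast (card_le_card fun q hq => by simp at hq ⊢; omega).trans
              (card_range l).le
        _ = l * m * C := by ring
  have htail : ‖∑ t ∈ Ico (Q * m) N, v t‖ ≤ m * C := by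
    calc _ ≤ (N - Q * m : ℕ) * C :=
          (norm_sum_le_card_mul _ fun t _ => hC t).trans_eq (by rw [Nat.card_Ico])
      _ ≤ m * C := by
          gcongr
          exact_mod_cast Nat.sub_le_iff_le_add'.2 (Nat.lt_div_mul_add hm).le
  rw [← sum_range_add_sum_Ico v (Nat.div_mul_le_self N m)]
  calc _ ≤ _ := norm_add_le _ _
    _ ≤ N / m * B + l * m * C + m * C := add_le_add hblocks htail
    _ = _ := by ring

lemma StrictMono.le_apply_of_range_subset {M L : ℕ → ℕ} (hM : StrictMono M) (hL : StrictMono L)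
    (hLM : Set.range L ⊆ Set.range M) (t : ℕ) : M t ≤ L t := by
  choose σ hσ using fun t => hLM ⟨t, rfl⟩
  have hσ_mono : StrictMono σ := fun a b hab => hM.lt_iff_lt.1 (by rw [hσ, hσ]; exact hL hab)
  exact (hM.monotone (hσ_mono.id_le t)).trans_eq (hσ t)

section SpreadingModel

variable {X : Type*} [SeminormedAddCommGroup X] [NormedSpace ℝ X]
  {E : Type*} [AddCommGroup E] [Module ℝ E] {ρ : Seminorm ℝ E} {e : ℕ → E} {δ : ℕ → ℝ}
  {M L : ℕ → ℕ}

theorem norm_sum_shifts_le_of_generates {k : ℕ} {x : (Fin k → ℕ) → X}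
    (hgen : Generates ρ x M e δ) (hL : StrictMono L) (hLM : ∀ t, M t ≤ L t)
    (hLsub : Set.range L ⊆ Set.range M) {m l : ℕ} (hml : m ≤ l) {s : Fin k → ℕ}
    (hs : StrictMono s) (hgap : HasGapsAtLeast (m + 1) s) (hls : ∀ i, l ≤ s i) :
    ‖∑ j ∈ range (m + 1), x (fun i => L (s i + j))‖ ≤ ρ (∑ j ∈ range (m + 1), e j) + δ l := by
  have h := hgen m l hml _ (isPlegma_shifts hL hLsub hs hgap)
    (fun j i => (hLM l).trans (hL.monotone ((hls i).trans (Nat.le_add_right _ _))))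
    (fun _ => 1) (fun _ => ⟨by norm_num, le_rfl⟩)
  simp only [one_smul, Fin.sum_univ_eq_sum_range (fun j => x (fun i => L (s i + j))),
    Fin.sum_univ_eq_sum_range e] at h
  linarith [(abs_le.1 h).2]

theorem norm_sum_kSubsetEnums_comp_le_of_generates {k : ℕ} {x : (Fin (k + 1) → ℕ) → X}
    {C : ℝ} (hC : ∀ s, ‖x s‖ ≤ C) (hgen : Generates ρ x M e δ) (hL : StrictMono L)
    (hLM : ∀ t, M t ≤ L t) (hLsub : Set.range L ⊆ Set.range M) {m l : ℕ} (hml : m ≤ l)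
    (hδ : 0 ≤ δ l) (n : ℕ) :
    ‖∑ c ∈ kSubsetEnums (k + 1) (range n), x (L ∘ c)‖
      ≤ #(kSubsetEnums (k + 1) (range n))
          * (ρ (((m + 1 : ℕ) : ℝ)⁻¹ • ∑ j ∈ range (m + 1), e j) + δ l)
        + ((l + 1) * (m + 1) * C + k * (m + 1) * C) * n ^ k := by
  set B := ρ (∑ j ∈ range (m + 1), e j) + δ l
  have hC0 : 0 ≤ C := (norm_nonneg _).trans (hC 0)
  have hline : ∀ b : Fin (k + 1) → ℕ, StrictMono b → HasGapsAtLeast (m + 1) b → ∀ N : ℕ,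
      ‖∑ t ∈ range N, x (L ∘ fun i => b i + t)‖
        ≤ N * (B / (m + 1 : ℕ)) + (l + 1) * (m + 1 : ℕ) * C := by
    intro b hb hgap N
    have hblock : ∀ q, l ≤ q →
        ‖∑ r ∈ range (m + 1), x (L ∘ fun i => b i + (q * (m + 1) + r))‖ ≤ B := fun q hq => by
      simpa only [Function.comp_def, add_assoc] using
        norm_sum_shifts_le_of_generates hgen hL hLM hLsub hml (s := fun i => b i + q * (m + 1))
          (fun i j hij => Nat.add_lt_add_right (hb hij) _) (hasGapsAtLeast_shift_iff.2 hgap)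
          (fun i => hq.trans ((Nat.le_mul_of_pos_right q m.succ_pos).trans (Nat.le_add_left _ _)))
    simpa only [mul_div_assoc', div_mul_eq_mul_div] using
      norm_sum_range_le_of_blocks (m.succ_pos : 0 < m + 1) (fun t => hC _) hblock N
  have hA : B / (m + 1 : ℕ) ≤ ρ (((m + 1 : ℕ) : ℝ)⁻¹ • ∑ j ∈ range (m + 1), e j) + δ l := by
    rw [map_smul_eq_mul, norm_inv, Real.norm_natCast, inv_mul_eq_div, add_div]
    gcongr
    exact div_le_self hδ (by simp)
  refine (norm_sum_kSubsetEnums_le (y := fun c => x (L ∘ c)) (fun c => hC _)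
    (by positivity) (by positivity) hline n).trans ?_
  push_cast at hA ⊢
  gcongr

end SpreadingModel

lemma eventually_mul_pow_le_choose (k : ℕ) (D : ℝ) {ε : ℝ} (hε : 0 < ε) :
    ∀ᶠ n : ℕ in atTop, D * n ^ k ≤ ε * n.choose (k + 1) := by
  have h := ((Asymptotics.isLittleO_pow_pow_atTop_of_lt k.lt_succ_self).comp_tendsto
    tendsto_natCast_atTop_atTop).trans_isTheta (isTheta_choose (k + 1)).symm
  filter_upwards [(h.const_mul_left D).bound hε] with n hn
  simpa [abs_of_nonneg] using (le_abs_self _).trans hn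

theorem statement17_general {X : Type*} [NormedAddCommGroup X] [NormedSpace ℝ X]
    (k : ℕ) (hk : 0 < k) (x : (Fin k → ℕ) → X)
    (hbdd : ∃ C > 0, ∀ s : Fin k → ℕ, ‖x s‖ ≤ C)
    (M : ℕ → ℕ) (hM : StrictMono M)
    {E : Type*} [AddCommGroup E] [Module ℝ E] (ρ : Seminorm ℝ E) (e : ℕ → E)
    (δ : ℕ → ℝ) (hδ : IsNullPos δ)
    (hgen : Generates ρ x M e δ)
    (hces : Filter.Tendsto (fun n : ℕ => ρ ((n : ℝ)⁻¹ • ∑ j ∈ Finset.range n, e j))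
      Filter.atTop (nhds 0)) :
    ∀ L : ℕ → ℕ, StrictMono L → Set.range L ⊆ Set.range M →
      KCesaroSummableTo L x 0 := by
  intro L hL hLsub
  obtain ⟨k, rfl⟩ : ∃ k', k = k' + 1 := ⟨k - 1, by omega⟩
  obtain ⟨C, -, hC⟩ := hbdd
  rw [KCesaroSummableTo, NormedAddGroup.tendsto_nhds_zero]
  intro ε hε
  obtain ⟨m, hm⟩ : ∃ m : ℕ, ρ (((m + 1 : ℕ) : ℝ)⁻¹ • ∑ j ∈ range (m + 1), e j) < ε / 3 :=
    ((tendsto_add_atTop_iff_nat 1).2 hces |>.eventually (gt_mem_nhds (by positivity))).exists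
  obtain ⟨l, hml, hl⟩ : ∃ l, m ≤ l ∧ δ l < ε / 3 :=
    ((eventually_ge_atTop m).and (hδ.2.eventually (gt_mem_nhds (by positivity)))).exists
  set D := ((l + 1) * (m + 1) * C + k * (m + 1) * C : ℝ)
  filter_upwards [eventually_mul_pow_le_choose k D (by positivity : 0 < ε / 3),
    eventually_ge_atTop (k + 1)] with n hD hn
  have hchoose : (0 : ℝ) < n.choose (k + 1) := by exact_mod_cast Nat.choose_pos hn
  have hcard : (#(kSubsetEnums (k + 1) (range n)) : ℝ) ≤ n.choose (k + 1) := by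
    exact_mod_cast card_range n ▸ card_kSubsetEnums_le (k + 1) (range n)
  have hδl : 0 ≤ δ l := (hδ.1 l).le
  have hsum := norm_sum_kSubsetEnums_comp_le_of_generates hC hgen hL
    (hM.le_apply_of_range_subset hL hLsub) hLsub hml hδl n
  rw [sum_kSubsetEnums_image hL, norm_smul, norm_inv, Real.norm_natCast, inv_mul_lt_iff₀ hchoose]
  calc _ ≤ _ := hsum
    _ ≤ n.choose (k + 1) * (ρ (((m + 1 : ℕ) : ℝ)⁻¹ • ∑ j ∈ range (m + 1), e j) + δ l)
        + ε / 3 * n.choose (k + 1) := by gcongr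
    _ < n.choose (k + 1) * (ε / 3 + ε / 3) + ε / 3 * n.choose (k + 1) := by gcongr
    _ = n.choose (k + 1) * ε := by ring

/-- If a bounded `k`-sequence `(x s)` in a Banach space generates on
`[M]^k` a `k`-spreading model `(e n)` which is Cesàro summable to zero, then for every
infinite `L ⊆ M` the `k`-subsequence `(x s)_{s ∈ [L]^k}` is `k`-Cesàro summable to
zero. -/
theorem statement17 {X : Type*} [NormedAddCommGroup X] [NormedSpace ℝ X] [CompleteSpace X]
    (k : ℕ) (hk : 0 < k) (x : (Fin k → ℕ) → X)
    (hbdd : ∃ C > 0, ∀ s : Fin k → ℕ, ‖x s‖ ≤ C)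
    (M : ℕ → ℕ) (hM : StrictMono M)
    {E : Type*} [AddCommGroup E] [Module ℝ E] (ρ : Seminorm ℝ E) (e : ℕ → E)
    (δ : ℕ → ℝ) (hδ : IsNullPos δ) (hspr : IsSpreadingWith ρ e)
    (hgen : Generates ρ x M e δ)
    (hces : Filter.Tendsto (fun n : ℕ => ρ ((n : ℝ)⁻¹ • ∑ j ∈ Finset.range n, e j))
      Filter.atTop (nhds 0)) :
    ∀ L : ℕ → ℕ, StrictMono L → Set.range L ⊆ Set.range M →
      KCesaroSummableTo L x 0 :=
  statement17_general k hk x hbdd M hM ρ e δ hδ hgen hces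
end
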